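/- arXiv:2605.14072 — 5 statements merged into one kernel-verified Lean document; each statement's English description precedes it below -/
import Mathlib

section
/- Let 𝓕 ∈ FHC. The following are equivalent: (i) 𝓕 = 𝓔^⊥ for some 𝓔 ∈ FHC; (ii) 𝓕 = (𝓕^⊥)^⊥; (iii) there is a simple graph G on ℕ such that 𝓕 = 𝓒(G), the family of finite cliques of G. -/
/-- A family of finite subsets of ℕ which is hereditary and covers ℕ. -/
def FHC (F : Set (Finset ℕ)) : Prop :=
  (∀ ⦃E S : Finset ℕ⦄, E ⊆ S → S ∈ F → E ∈ F) ∧ (∀ n : ℕ, {n} ∈ F)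

/-- The orthogonal family: finite sets meeting every member of `F` in at most one point. -/
def perp (F : Set (Finset ℕ)) : Set (Finset ℕ) :=
  {E | ∀ S ∈ F, (E ∩ S).card ≤ 1}

/-- The family of finite cliques of a graph on ℕ. -/
def cliques (G : SimpleGraph ℕ) : Set (Finset ℕ) :=
  {C | G.IsClique (C : Set ℕ)}

lemma sub_perp_perp (A : Set (Finset ℕ)) : A ⊆ perp (perp A) := by
  intro S hS T hT
  rw [Finset.inter_comm]
  exact hT S hS

lemma perp_antitone {A B : Set (Finset ℕ)} (h : A ⊆ B) : perp B ⊆ perp A := by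
  intro E hE S hS
  exact hE S (h hS)

lemma FHC_perp (A : Set (Finset ℕ)) : FHC (perp A) := by
  constructor
  · intro E S hES hS T hT
    exact le_trans (Finset.card_le_card (Finset.inter_subset_inter_right hES)) (hS T hT)
  · intro n S hS
    calc ({n} ∩ S).card ≤ ({n} : Finset ℕ).card := Finset.card_le_card Finset.inter_subset_left
    _ = 1 := Finset.card_singleton n

theorem stmt_0 (F : Set (Finset ℕ)) (hF : FHC F) :
    ((∃ E : Set (Finset ℕ), FHC E ∧ F = perp E) ↔ F = perp (perp F)) ∧
    ((F = perp (perp F)) ↔ ∃ G : SimpleGraph ℕ, F = cliques G) := by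
  constructor
  · constructor
    · rintro ⟨E, _, rfl⟩
      apply Set.Subset.antisymm (sub_perp_perp _)
      exact perp_antitone (sub_perp_perp E)
    · intro h
      exact ⟨perp F, FHC_perp F, h⟩
  · constructor
    · intro h
      refine ⟨SimpleGraph.mk (fun n m => n ≠ m ∧ ({n, m} : Finset ℕ) ∈ F) ?_ ?_, ?_⟩
      · constructor; intro n m ⟨hne, hmem⟩
        exact ⟨hne.symm, by rwa [Finset.pair_comm]⟩
      · constructor; intro n ⟨hne, _⟩; exact hne rfl
      · apply Set.Subset.antisymm
        · intro C hC x hx y hy hxy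
          refine ⟨hxy, hF.1 ?_ hC⟩
          intro z hz
          simp only [Finset.mem_insert, Finset.mem_singleton] at hz
          rcases hz with rfl | rfl
          · exact hx
          · exact hy
        · intro C hC
          rw [h]
          intro T hT
          by_contra hcard
          push_neg at hcard
          obtain ⟨n, hn, m, hm, hnm⟩ := Finset.one_lt_card.mp hcard
          simp only [Finset.mem_inter] at hn hm
          have hadj := hC hn.1 hm.1 hnm
          have hpair : ({n, m} : Finset ℕ) ∈ F := hadj.2
          have := hT _ hpair
          have : 1 < (T ∩ {n, m}).card :=
            Finset.one_lt_card.mpr ⟨n, Finset.mem_inter.mpr ⟨hn.2, by simp⟩,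
              m, Finset.mem_inter.mpr ⟨hm.2, by simp⟩, hnm⟩
          omega
    · rintro ⟨G, rfl⟩
      apply Set.Subset.antisymm (sub_perp_perp _)
      intro C hC x hx y hy hxy
      by_contra hadj
      have hperp : ({x, y} : Finset ℕ) ∈ perp (cliques G) := by
        intro S hS
        by_contra hcard
        push_neg at hcard
        obtain ⟨n, hn, m, hm, hnm⟩ := Finset.one_lt_card.mp hcard
        simp only [Finset.mem_inter, Finset.mem_insert, Finset.mem_singleton] at hn hm
        have hadj' : G.Adj n m := hS hn.2 hm.2 hnm
        rcases hn.1 with rfl | rfl <;> rcases hm.1 with rfl | rfl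
        · exact hnm rfl
        · exact hadj hadj'
        · exact hadj hadj'.symm
        · exact hnm rfl
      have := hC _ hperp
      have : 1 < (C ∩ {x, y}).card :=
        Finset.one_lt_card.mpr ⟨x, Finset.mem_inter.mpr ⟨hx, by simp⟩,
          y, Finset.mem_inter.mpr ⟨hy, by simp⟩, hxy⟩
      omega
end

section
/- The family 𝓒₂ of finite chains in ℕ×ℕ with the coordinatewise product order satisfies property (S): for every sequence (x_n) of finitely supported functions ℕ×ℕ → ℝ with pairwise disjoint supports, each support a chain, and ‖x_n‖_{𝓒₂} = 1 for all n, there exists a chain D ⊆ ℕ×ℕ (finite or infinite) such that limsup_{n→∞} ‖P_D(x_n)‖_{𝓒₂} > 0. -/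
open scoped ENNReal

/-- The combinatorial extended norm generated by a family of finite sets. -/
noncomputable def combNorm {α : Type*} (F : Set (Finset α)) (x : α → ℝ) : ℝ≥0∞ :=
  ⨆ S ∈ F, ENNReal.ofReal (∑ i ∈ S, |x i|)

/-- The family of finite chains in ℕ × ℕ with the coordinatewise product order. -/
def C2 : Set (Finset (ℕ × ℕ)) := {F | IsChain (· ≤ ·) (F : Set (ℕ × ℕ))}

/-- Lower bound for the norm of a projection, from a chain finset inside D. -/
lemma combNorm_indicator_ge (y : (ℕ × ℕ) → ℝ) (D : Set (ℕ × ℕ)) (S : Finset (ℕ × ℕ))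
    (hS : IsChain (· ≤ ·) (S : Set (ℕ × ℕ))) (hSD : ∀ p ∈ S, p ∈ D) :
    ENNReal.ofReal (∑ p ∈ S, |y p|) ≤ combNorm C2 (D.indicator y) := by
  have h1 : (∑ p ∈ S, |y p|) = ∑ p ∈ S, |D.indicator y p| := by
    refine Finset.sum_congr rfl fun p hp => ?_
    rw [Set.indicator_of_mem (hSD p hp)]
  rw [h1]
  exact le_iSup₂ (f := fun S (_ : S ∈ C2) => ENNReal.ofReal (∑ i ∈ S, |D.indicator y i|)) S hS

/-- If the support is a chain, the norm is attained by the full support. -/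
lemma combNorm_total (y : (ℕ × ℕ) → ℝ) (hf : (Function.support y).Finite)
    (hc : IsChain (· ≤ ·) (Function.support y)) (h1 : combNorm C2 y = 1) :
    ∑ p ∈ hf.toFinset, |y p| = 1 := by
  classical
  have hT : (↑hf.toFinset : Set (ℕ × ℕ)) = Function.support y := hf.coe_toFinset
  have hub : combNorm C2 y ≤ ENNReal.ofReal (∑ p ∈ hf.toFinset, |y p|) := by
    refine iSup₂_le fun S hS => ENNReal.ofReal_le_ofReal ?_
    have he : ∑ p ∈ S ∩ hf.toFinset, |y p| = ∑ p ∈ S, |y p| := by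
      refine Finset.sum_subset (Finset.inter_subset_left) fun p hp hnp => ?_
      have : p ∉ Function.support y := by
        intro hmem
        exact hnp (Finset.mem_inter.2 ⟨hp, hf.mem_toFinset.2 hmem⟩)
      simp [Function.notMem_support.1 this]
    rw [← he]
    exact Finset.sum_le_sum_of_subset_of_nonneg (Finset.inter_subset_right)
      (fun p _ _ => abs_nonneg _)
  have hlb : ENNReal.ofReal (∑ p ∈ hf.toFinset, |y p|) ≤ combNorm C2 y := by
    have hmem : hf.toFinset ∈ C2 := by
      show IsChain (· ≤ ·) (↑hf.toFinset : Set (ℕ × ℕ))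
      rw [hT]; exact hc
    exact le_iSup₂ (f := fun S (_ : S ∈ C2) => ENNReal.ofReal (∑ i ∈ S, |y i|)) hf.toFinset hmem
  have : ENNReal.ofReal (∑ p ∈ hf.toFinset, |y p|) = 1 := le_antisymm (h1 ▸ hlb) (h1 ▸ hub)
  exact ENNReal.ofReal_eq_one.1 this

/-- Lines (vertical if b, horizontal otherwise) are chains. -/
lemma lineSet_chain (b : Bool) (c : ℕ) :
    IsChain (· ≤ ·) {p : ℕ × ℕ | (if b then p.1 else p.2) = c} := by
  intro p hp q hq _
  simp only [Set.mem_setOf_eq] at hp hq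
  cases b <;> simp at hp hq
  · rcases le_total p.1 q.1 with h | h
    · exact Or.inl ⟨h, by omega⟩
    · exact Or.inr ⟨h, by omega⟩
  · rcases le_total p.2 q.2 with h | h
    · exact Or.inl ⟨by omega, h⟩
    · exact Or.inr ⟨by omega, h⟩

/-- Fiberwise bound on a strip. -/
lemma strip_bound (T : Finset (ℕ × ℕ)) (f : (ℕ × ℕ) → ℝ) (hf : ∀ p, 0 ≤ f p)
    (g : ℕ × ℕ → ℕ) (K : ℕ) (ε : ℝ)
    (h : ∀ c ∈ Finset.range (K + 1), ∑ p ∈ T.filter (fun p => g p = c), f p ≤ ε) :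
    ∑ p ∈ T.filter (fun p => g p ≤ K), f p ≤ (K + 1 : ℝ) * ε := by
  classical
  have hbi : T.filter (fun p => g p ≤ K)
      = (Finset.range (K + 1)).biUnion (fun c => T.filter (fun p => g p = c)) := by
    ext p
    simp only [Finset.mem_filter, Finset.mem_biUnion, Finset.mem_range]
    constructor
    · rintro ⟨hp, hle⟩; exact ⟨g p, by omega, hp, rfl⟩
    · rintro ⟨c, hc, hp, hgc⟩; exact ⟨hp, by omega⟩
  have hdisj : (↑(Finset.range (K + 1)) : Set ℕ).PairwiseDisjoint
      (fun c => T.filter (fun p => g p = c)) := by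
    intro a _ b _ hab
    refine Finset.disjoint_left.2 fun p hp hq => hab ?_
    have h1 := (Finset.mem_filter.1 hp).2
    have h2 := (Finset.mem_filter.1 hq).2
    omega
  rw [hbi, Finset.sum_biUnion hdisj]
  calc ∑ c ∈ Finset.range (K + 1), ∑ p ∈ T.filter (fun p => g p = c), f p
      ≤ ∑ _c ∈ Finset.range (K + 1), ε := Finset.sum_le_sum h
    _ = (K + 1 : ℝ) * ε := by
        rw [Finset.sum_const, Finset.card_range, nsmul_eq_mul]
        push_cast; ring

theorem stmt_1 (x : ℕ → (ℕ × ℕ) → ℝ)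
    (hfin : ∀ n, (Function.support (x n)).Finite)
    (hdisj : ∀ n m, n ≠ m → Disjoint (Function.support (x n)) (Function.support (x m)))
    (hchain : ∀ n, IsChain (· ≤ ·) (Function.support (x n)))
    (hnorm : ∀ n, combNorm C2 (x n) = 1) :
    ∃ D : Set (ℕ × ℕ), IsChain (· ≤ ·) D ∧
      0 < Filter.atTop.limsup (fun n => combNorm C2 (D.indicator (x n))) := by
  classical
  set F : ℕ → Finset (ℕ × ℕ) := fun n => (hfin n).toFinset with hFdef
  have htotal : ∀ n, ∑ p ∈ F n, |x n p| = 1 :=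
    fun n => combNorm_total _ (hfin n) (hchain n) (hnorm n)
  by_cases hline : ∃ (b : Bool) (c : ℕ), 0 < Filter.atTop.limsup
      (fun n => combNorm C2 (({p : ℕ × ℕ | (if b then p.1 else p.2) = c}).indicator (x n)))
  · obtain ⟨b, c, hp⟩ := hline
    exact ⟨_, lineSet_chain b c, hp⟩
  · push_neg at hline
    have hline0 : ∀ (b : Bool) (c : ℕ), Filter.atTop.limsup
        (fun n => ENNReal.ofReal
          (∑ p ∈ (F n).filter (fun p => (if b then p.1 else p.2) = c), |x n p|)) = 0 := by
      intro b c
      refine le_antisymm ?_ (zero_le)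
      have h1 : ∀ n, ENNReal.ofReal
          (∑ p ∈ (F n).filter (fun p => (if b then p.1 else p.2) = c), |x n p|)
          ≤ combNorm C2 (({p : ℕ × ℕ | (if b then p.1 else p.2) = c}).indicator (x n)) := by
        intro n
        refine combNorm_indicator_ge _ _ _ ?_ ?_
        · refine IsChain.mono ?_ (lineSet_chain b c)
          intro p hp
          simp only [Finset.coe_filter, Set.mem_setOf_eq] at hp
          exact hp.2
        · intro p hp
          exact (Finset.mem_filter.1 hp).2
      calc Filter.atTop.limsup _
          ≤ Filter.atTop.limsup (fun n => combNorm C2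
              (({p : ℕ × ℕ | (if b then p.1 else p.2) = c}).indicator (x n))) :=
            Filter.limsup_le_limsup (Filter.Eventually.of_forall h1)
        _ ≤ 0 := hline b c
    have key : ∀ K N : ℕ, ∃ n, N ≤ n ∧
        (1 : ℝ)/2 ≤ ∑ p ∈ (F n).filter (fun p => K < p.1 ∧ K < p.2), |x n p| := by
      intro K N
      set ε : ℝ := 1/(4*((K : ℝ)+1)) with hεdef
      have hεpos : 0 < ε := by positivity
      have hev : ∀ (b : Bool) (c : ℕ), ∀ᶠ n in Filter.atTop,
          (∑ p ∈ (F n).filter (fun p => (if b then p.1 else p.2) = c), |x n p|) < ε := by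
        intro b c
        have h2 := Filter.eventually_lt_of_limsup_lt (b := ENNReal.ofReal ε)
          (by rw [hline0 b c]; exact ENNReal.ofReal_pos.2 hεpos)
        exact h2.mono fun n hn => (ENNReal.ofReal_lt_ofReal_iff hεpos).1 hn
      have hev2 : ∀ᶠ n in Filter.atTop, ∀ c ∈ Finset.range (K+1),
          (∑ p ∈ (F n).filter (fun p => p.1 = c), |x n p|) < ε ∧
          (∑ p ∈ (F n).filter (fun p => p.2 = c), |x n p|) < ε := by
        rw [Filter.eventually_all_finset]
        intro c _
        filter_upwards [hev true c, hev false c] with n h1 h2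
        constructor
        · simpa using h1
        · simpa using h2
      obtain ⟨n, hn, hnN⟩ := (hev2.and (Filter.eventually_ge_atTop N)).exists
      refine ⟨n, hnN, ?_⟩
      have habs : ∀ p : ℕ × ℕ, 0 ≤ |x n p| := fun p => abs_nonneg _
      have hsplit : ∑ p ∈ (F n).filter (fun p => K < p.1 ∧ K < p.2), |x n p|
          + ∑ p ∈ (F n).filter (fun p => ¬(K < p.1 ∧ K < p.2)), |x n p| = 1 := by
        rw [Finset.sum_filter_add_sum_filter_not]; exact htotal n
      have hs1 : ∑ p ∈ (F n).filter (fun p => p.1 ≤ K), |x n p| ≤ ((K : ℝ) + 1) * ε :=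
        strip_bound _ _ habs _ K ε (fun c hc => le_of_lt (hn c hc).1)
      have hs2 : ∑ p ∈ (F n).filter (fun p => p.2 ≤ K), |x n p| ≤ ((K : ℝ) + 1) * ε :=
        strip_bound _ _ habs _ K ε (fun c hc => le_of_lt (hn c hc).2)
      have hsub : (F n).filter (fun p => ¬(K < p.1 ∧ K < p.2)) ⊆
          (F n).filter (fun p => p.1 ≤ K) ∪ (F n).filter (fun p => p.2 ≤ K) := by
        intro p hp
        simp only [Finset.mem_filter, Finset.mem_union] at hp ⊢
        rcases hp with ⟨h1, h2⟩
        rw [not_and_or, not_lt, not_lt] at h2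
        rcases h2 with h | h
        · exact Or.inl ⟨h1, h⟩
        · exact Or.inr ⟨h1, h⟩
      have hcompl : ∑ p ∈ (F n).filter (fun p => ¬(K < p.1 ∧ K < p.2)), |x n p|
          ≤ 2 * (((K : ℝ) + 1) * ε) := by
        have hle1 : ∑ p ∈ (F n).filter (fun p => ¬(K < p.1 ∧ K < p.2)), |x n p|
            ≤ ∑ p ∈ (F n).filter (fun p => p.1 ≤ K) ∪ (F n).filter (fun p => p.2 ≤ K), |x n p| :=
          Finset.sum_le_sum_of_subset_of_nonneg hsub (fun p _ _ => habs p)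
        have hle2 := Finset.sum_union_inter (s₁ := (F n).filter (fun p => p.1 ≤ K))
          (s₂ := (F n).filter (fun p => p.2 ≤ K)) (f := fun p => |x n p|)
        have hge : 0 ≤ ∑ p ∈ (F n).filter (fun p => p.1 ≤ K) ∩ (F n).filter (fun p => p.2 ≤ K),
            |x n p| := Finset.sum_nonneg fun p _ => habs p
        linarith
      have hεval : 2 * (((K : ℝ) + 1) * ε) = 1/2 := by
        rw [hεdef]; field_simp; ring
      linarith
    choose pick hpickN hpickM using key
    set Km : ℕ → ℕ := fun n => (F n).sup (fun p => max p.1 p.2) with hKmdef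
    set s : ℕ → ℕ × ℕ := fun j => Nat.rec (pick 0 0, 0)
      (fun _ prev =>
        (pick (max prev.2 (Km prev.1)) (prev.1 + 1), max prev.2 (Km prev.1))) j with hsdef
    have hmass : ∀ j, (1 : ℝ)/2 ≤
        ∑ p ∈ (F (s j).1).filter (fun p => (s j).2 < p.1 ∧ (s j).2 < p.2), |x (s j).1 p| := by
      intro j
      cases j with
      | zero => exact hpickM 0 0
      | succ j => exact hpickM (max (s j).2 (Km (s j).1)) ((s j).1 + 1)
    have hBsucc : ∀ j, (s j).2 ≤ (s (j+1)).2 := fun j => le_max_left _ _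
    have hBmono : Monotone (fun j => (s j).2) := monotone_nat_of_le_succ hBsucc
    have hKB : ∀ j, Km (s j).1 ≤ (s (j+1)).2 := fun j => le_max_right _ _
    have hsm : StrictMono (fun j => (s j).1) :=
      strictMono_nat_of_lt_succ fun j => Nat.lt_of_succ_le (hpickN _ _)
    set Q : ℕ → Finset (ℕ × ℕ) := fun j =>
      (F (s j).1).filter (fun p => (s j).2 < p.1 ∧ (s j).2 < p.2) with hQdef
    set D : Set (ℕ × ℕ) := ⋃ j, (↑(Q j) : Set (ℕ × ℕ)) with hDdef
    have hmemQ : ∀ {j : ℕ} {p : ℕ × ℕ}, p ∈ Q j → p ∈ Function.support (x (s j).1) :=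
      fun {j p} h => (hfin _).mem_toFinset.1 (Finset.mem_filter.1 h).1
    have cross : ∀ {j k : ℕ} {p q : ℕ × ℕ}, j < k → p ∈ Q j → q ∈ Q k → p ≤ q := by
      intro j k p q hjk hpj hqk
      obtain ⟨hpF, _⟩ := Finset.mem_filter.1 hpj
      obtain ⟨hqF, hq1, hq2⟩ := Finset.mem_filter.1 hqk
      have hsup : max p.1 p.2 ≤ Km (s j).1 :=
        Finset.le_sup (f := fun p : ℕ × ℕ => max p.1 p.2) hpF
      have h1 : p.1 ≤ Km (s j).1 := le_trans (le_max_left _ _) hsup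
      have h2 : p.2 ≤ Km (s j).1 := le_trans (le_max_right _ _) hsup
      have h3 : (s (j+1)).2 ≤ (s k).2 := hBmono hjk
      have h4 := hKB j
      exact Prod.le_def.2 ⟨by omega, by omega⟩
    have hDchain : IsChain (· ≤ ·) D := by
      intro p hp q hq hne
      simp only [hDdef, Set.mem_iUnion, Finset.mem_coe] at hp hq
      obtain ⟨j, hpj⟩ := hp
      obtain ⟨k, hqk⟩ := hq
      rcases lt_trichotomy j k with h | h | h
      · exact Or.inl (cross h hpj hqk)
      · subst h
        exact hchain (s j).1 (hmemQ hpj) (hmemQ hqk) hne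
      · exact Or.inr (cross h hqk hpj)
    refine ⟨D, hDchain, ?_⟩
    have hfreq : ∃ᶠ n in Filter.atTop,
        ENNReal.ofReal ((1:ℝ)/2) ≤ combNorm C2 (D.indicator (x n)) := by
      rw [Filter.frequently_atTop]
      intro N
      refine ⟨(s N).1, hsm.le_apply, ?_⟩
      have hch : IsChain (· ≤ ·) (↑(Q N) : Set (ℕ × ℕ)) := by
        refine IsChain.mono ?_ (hchain (s N).1)
        intro p hp
        exact hmemQ (Finset.mem_coe.1 hp)
      have hsub : ∀ p ∈ Q N, p ∈ D := by
        intro p hp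
        exact Set.mem_iUnion.2 ⟨N, hp⟩
      calc ENNReal.ofReal ((1:ℝ)/2)
          ≤ ENNReal.ofReal (∑ p ∈ Q N, |x (s N).1 p|) := ENNReal.ofReal_le_ofReal (hmass N)
        _ ≤ combNorm C2 (D.indicator (x (s N).1)) := combNorm_indicator_ge _ _ _ hch hsub
    calc (0 : ℝ≥0∞) < ENNReal.ofReal ((1:ℝ)/2) := ENNReal.ofReal_pos.2 (by norm_num)
      _ ≤ _ := Filter.le_limsup_of_frequently_le hfreq
end

section
/- Property (S*) fails for 𝓒₂: there exists a sequence (F_n) of pairwise disjoint finite chains in ℕ×ℕ (with the product order) such that for every finite collection 𝓓 of chains in ℕ×ℕ (finite or infinite chains allowed), the set { n : F_n ⊆ ⋃𝓓 } is finite. -/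
theorem stmt_2 : ∃ F : ℕ → Finset (ℕ × ℕ),
    (∀ n m, n ≠ m → Disjoint (F n) (F m)) ∧
    (∀ n, IsChain (· ≤ ·) ((F n : Set (ℕ × ℕ)))) ∧
    ∀ (m : ℕ) (D : Fin m → Set (ℕ × ℕ)), (∀ i, IsChain (· ≤ ·) (D i)) →
      {n | (F n : Set (ℕ × ℕ)) ⊆ ⋃ i, D i}.Finite := by
  refine ⟨fun n => {n} ×ˢ Finset.range (n + 1), ?_, ?_, ?_⟩
  · intro n m hnm
    rw [Finset.disjoint_left]
    rintro ⟨a, b⟩ ha hb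
    simp only [Finset.mem_product, Finset.mem_singleton, Finset.mem_range] at ha hb
    exact hnm (ha.1 ▸ hb.1 ▸ rfl)
  · intro n
    rintro ⟨a, b⟩ ha ⟨c, d⟩ hc hne
    simp only [Finset.coe_product, Set.mem_prod, Finset.coe_singleton,
      Set.mem_singleton_iff, Finset.coe_range, Set.mem_Iio] at ha hc
    rcases le_total b d with h | h
    · exact Or.inl ⟨le_of_eq (ha.1.trans hc.1.symm), h⟩
    · exact Or.inr ⟨le_of_eq (hc.1.trans ha.1.symm), h⟩
  · intro m D hD
    by_contra h
    have hinf : {n | ((({n} ×ˢ Finset.range (n + 1)) : Finset (ℕ × ℕ)) : Set (ℕ × ℕ))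
        ⊆ ⋃ i, D i}.Infinite := h
    have hex : ∀ k : ℕ, ∃ x, x ∈ {n | ((({n} ×ˢ Finset.range (n + 1)) : Finset (ℕ × ℕ)) :
        Set (ℕ × ℕ)) ⊆ ⋃ i, D i} ∧ k < x := by
      intro k
      obtain ⟨x, hx1, hx2⟩ := hinf.exists_gt k
      exact ⟨x, hx1, hx2⟩
    choose g hg1 hg2 using hex
    -- e j : the j-th chosen covered column, strictly increasing, all > m
    set e : ℕ → ℕ := fun j => Nat.rec (g m) (fun _ prev => g prev) j with he
    have he0 : e 0 = g m := rfl
    have hes : ∀ j, e (j + 1) = g (e j) := fun j => rfl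
    have heS : ∀ j, e j ∈ {n | ((({n} ×ˢ Finset.range (n + 1)) : Finset (ℕ × ℕ)) :
        Set (ℕ × ℕ)) ⊆ ⋃ i, D i} := by
      intro j
      cases j with
      | zero => exact hg1 m
      | succ j => rw [hes]; exact hg1 (e j)
    have hmono : StrictMono e := strictMono_nat_of_lt_succ (fun j => by rw [hes]; exact hg2 (e j))
    have hegt : ∀ j, m < e j := by
      intro j
      calc m < e 0 := by rw [he0]; exact hg2 m
        _ ≤ e j := hmono.monotone (Nat.zero_le j)
    -- the antichain points
    have hp : ∀ j : Fin (m + 1), ((e j.val, m - j.val) : ℕ × ℕ) ∈ ⋃ i, D i := by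
      intro j
      apply heS j.val
      rw [Finset.mem_coe, Finset.mem_product]
      refine ⟨Finset.mem_singleton_self _, Finset.mem_range.mpr ?_⟩
      have := hegt j.val; omega
    have hp' : ∀ j : Fin (m + 1), ∃ i : Fin m, ((e j.val, m - j.val) : ℕ × ℕ) ∈ D i := by
      intro j
      simpa using hp j
    choose f hf using hp'
    have hcard : Fintype.card (Fin m) < Fintype.card (Fin (m + 1)) := by simp
    obtain ⟨j, j', hne0, heq0⟩ := Fintype.exists_ne_map_eq_of_card_lt f hcard
    have key : ∀ j j' : Fin (m + 1), (j : ℕ) < (j' : ℕ) → f j = f j' → False := by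
      intro j j' hlt heq
      have hj'm : (j' : ℕ) ≤ m := Nat.lt_succ_iff.mp j'.isLt
      have hpj : ((e j.val, m - j.val) : ℕ × ℕ) ∈ D (f j) := hf j
      have hpj' : ((e j'.val, m - j'.val) : ℕ × ℕ) ∈ D (f j) := heq ▸ hf j'
      have hneq : ((e j.val, m - j.val) : ℕ × ℕ) ≠ (e j'.val, m - j'.val) := by
        intro hc
        exact absurd (congrArg Prod.fst hc) (by simpa using (hmono hlt).ne)
      rcases hD (f j) hpj hpj' hneq with hle | hle
      · have h2 : m - j.val ≤ m - j'.val := hle.2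
        omega
      · exact absurd hle.1 (not_le.mpr (hmono hlt))
    have hvne : (j : ℕ) ≠ (j' : ℕ) := fun hc => hne0 (Fin.ext hc)
    rcases Nat.lt_or_ge (j : ℕ) (j' : ℕ) with hlt | hge
    · exact key j j' hlt heq0
    · exact key j' j (by omega) heq0.symm
end

section
/- (Perfect graph theorem.) Let G be a simple graph on ℕ such that for every nonempty finite H ⊆ ℕ the chromatic number of the induced subgraph G↾H equals its clique number (i.e., G is perfect). Then the complement graph Gᶜ is also perfect. -/
/-- The chromatic number of a finite graph. -/
noncomputable def chromNum {V : Type*} [Fintype V] (G : SimpleGraph V) : ℕ :=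
  sInf {n | G.Colorable n}

/-- The clique number of a finite graph. -/
noncomputable def cliqNum {V : Type*} [Fintype V] (G : SimpleGraph V) : ℕ :=
  sSup {n | ∃ s : Finset V, G.IsNClique n s}

section basic
variable {V : Type*} [Fintype V] {G : SimpleGraph V}

lemma colorable_chromNum (G : SimpleGraph V) : G.Colorable (chromNum G) :=
  Nat.sInf_mem (⟨Fintype.card V, by exact G.colorable_of_fintype⟩ : {n | G.Colorable n}.Nonempty)

lemma chromNum_le {n : ℕ} (h : G.Colorable n) : chromNum G ≤ n := Nat.sInf_le h

lemma cliq_bddAbove : BddAbove {n | ∃ s : Finset V, G.IsNClique n s} := by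
  refine ⟨Fintype.card V, ?_⟩
  rintro y ⟨s, hs⟩
  rw [← hs.2]
  exact Finset.card_le_univ s

lemma exists_cliqNum (G : SimpleGraph V) : ∃ s : Finset V, G.IsNClique (cliqNum G) s :=
  Nat.sSup_mem (⟨0, by exact ⟨∅, by simp⟩⟩ : {n | ∃ s : Finset V, G.IsNClique n s}.Nonempty) cliq_bddAbove

lemma le_cliqNum {n : ℕ} {s : Finset V} (h : G.IsNClique n s) : n ≤ cliqNum G :=
  le_csSup cliq_bddAbove ⟨s, h⟩

lemma cliqNum_le_chromNum (G : SimpleGraph V) : cliqNum G ≤ chromNum G := by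
  by_contra h
  push_neg at h
  obtain ⟨s, hs⟩ := exists_cliqNum G
  obtain ⟨t, hts, htc⟩ := Finset.exists_subset_card_eq (show chromNum G + 1 ≤ s.card by have h2 := hs.2; omega)
  exact (colorable_chromNum G).cliqueFree (Nat.lt_succ_self _) t
    ⟨hs.1.subset (by exact_mod_cast hts), htc⟩

lemma one_le_cliqNum [Nonempty V] (G : SimpleGraph V) : 1 ≤ cliqNum G := by
  obtain ⟨v⟩ := ‹Nonempty V›
  exact le_cliqNum (s := {v}) ⟨by simp, by simp⟩

lemma one_le_chromNum [Nonempty V] (G : SimpleGraph V) : 1 ≤ chromNum G :=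
  le_trans (one_le_cliqNum G) (cliqNum_le_chromNum G)

lemma card_le_chromNum_mul_cliqNum_compl (G : SimpleGraph V) :
    Fintype.card V ≤ chromNum G * cliqNum Gᶜ := by
  classical
  obtain ⟨c⟩ := colorable_chromNum G
  have h := Finset.card_eq_sum_card_fiberwise
    (f := c) (s := Finset.univ) (t := Finset.univ) (fun x _ => Finset.mem_univ _)
  rw [← Finset.card_univ, h]
  have hb : ∀ b ∈ (Finset.univ : Finset (Fin (chromNum G))),
      (Finset.univ.filter fun v => c v = b).card ≤ cliqNum Gᶜ := by
    intro b _
    refine le_cliqNum (G := Gᶜ) (s := Finset.univ.filter fun v => c v = b) ⟨?_, rfl⟩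
    intro x hx y hy hxy
    simp only [Finset.coe_filter, Set.mem_setOf_eq] at hx hy
    refine ⟨hxy, fun hadj => c.valid hadj (hx.2.trans hy.2.symm)⟩
  calc ∑ b : Fin (chromNum G), (Finset.univ.filter fun v => c v = b).card
      ≤ (Finset.univ : Finset (Fin (chromNum G))).card * cliqNum Gᶜ :=
        Finset.sum_le_card_nsmul _ _ _ hb
    _ = chromNum G * cliqNum Gᶜ := by simp
end basic

set_option linter.unusedSectionVars false
section iso
variable {V W : Type*} [Fintype V] [Fintype W]

lemma colorable_iff_of_iso {G : SimpleGraph V} {H : SimpleGraph W} (e : G ≃g H) (n : ℕ) :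
    G.Colorable n ↔ H.Colorable n :=
  ⟨fun ⟨c⟩ => ⟨c.comp e.symm.toHom⟩, fun ⟨c⟩ => ⟨c.comp e.toHom⟩⟩

lemma chromNum_eq_of_iso {G : SimpleGraph V} {H : SimpleGraph W} (e : G ≃g H) :
    chromNum G = chromNum H := by
  unfold chromNum
  congr 1
  ext n
  exact colorable_iff_of_iso e n

lemma isNClique_map_iso {G : SimpleGraph V} {H : SimpleGraph W} (e : G ≃g H) {n : ℕ}
    {s : Finset V} (h : G.IsNClique n s) :
    H.IsNClique n (s.map e.toEquiv.toEmbedding) := by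
  constructor
  · intro x hx y hy hxy
    simp only [Finset.coe_map, Set.mem_image, Finset.mem_coe] at hx hy
    obtain ⟨a, ha, rfl⟩ := hx
    obtain ⟨b, hb, rfl⟩ := hy
    have hab : a ≠ b := fun hab => hxy (by rw [hab])
    exact e.map_adj_iff.mpr (h.1 ha hb hab)
  · rw [Finset.card_map, h.2]

lemma cliqNum_eq_of_iso {G : SimpleGraph V} {H : SimpleGraph W} (e : G ≃g H) :
    cliqNum G = cliqNum H := by
  apply le_antisymm
  · obtain ⟨s, hs⟩ := exists_cliqNum G
    exact le_cliqNum (isNClique_map_iso e hs)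
  · obtain ⟨s, hs⟩ := exists_cliqNum H
    exact le_cliqNum (isNClique_map_iso e.symm hs)
end iso

section induce
variable {V : Type*}

lemma compl_induce (G : SimpleGraph V) (s : Set V) :
    (G.induce s)ᶜ = Gᶜ.induce s := by
  ext a b
  simp only [SimpleGraph.compl_adj, SimpleGraph.comap_adj, Function.Embedding.coe_subtype,
    ne_eq, Subtype.coe_ne_coe]

/-- iso between double induce and induce of the image -/
noncomputable def induceInduceIso (G : SimpleGraph V) (s : Set V) (t : Set ↥s) :
    (G.induce s).induce t ≃g G.induce (Subtype.val '' t) where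
  toEquiv := Equiv.Set.image Subtype.val t Subtype.val_injective
  map_rel_iff' := by
    intro a b
    simp only [Equiv.Set.image_apply, SimpleGraph.comap_adj, Function.Embedding.coe_subtype]
/-- iso between induced subgraphs on equal sets -/
noncomputable def induceSetCongrIso (G : SimpleGraph V) {s t : Set V} (h : s = t) :
    G.induce s ≃g G.induce t where
  toEquiv := Equiv.setCongr h
  map_rel_iff' := Iff.rfl
end induce

section transfer
variable {V : Type*} [Fintype V] {G : SimpleGraph V}

/-- a clique of the induced subgraph is a clique of the ambient graph -/
lemma isNClique_of_induce {s : Set V} {n : ℕ} {C : Finset ↥s}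
    (h : (G.induce s).IsNClique n C) :
    G.IsNClique n (C.map (Function.Embedding.subtype _)) := by
  constructor
  · intro x hx y hy hxy
    simp only [Finset.coe_map, Set.mem_image, Finset.mem_coe,
      Function.Embedding.coe_subtype] at hx hy
    obtain ⟨a, ha, rfl⟩ := hx
    obtain ⟨b, hb, rfl⟩ := hy
    exact h.1 ha hb (fun hab => hxy (by rw [hab]))
  · rw [Finset.card_map, h.2]

lemma cliqNum_induce_le (s : Set V) [Fintype ↥s] : cliqNum (G.induce s) ≤ cliqNum G := by
  obtain ⟨C, hC⟩ := exists_cliqNum (G.induce s)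
  exact le_cliqNum (isNClique_of_induce hC)

/-- a clique of the ambient graph inside `s` gives a clique of the induced subgraph -/
lemma isNClique_induce_of {s : Set V} {n : ℕ} {C : Finset V} (h : G.IsNClique n C)
    (hCs : ∀ x ∈ C, x ∈ s) : ∃ C' : Finset ↥s, (G.induce s).IsNClique n C' := by
  classical
  refine ⟨(C.attach).image (fun x => (⟨x.1, hCs x.1 x.2⟩ : ↥s)), ?_, ?_⟩
  · intro x hx y hy hxy
    simp only [Finset.coe_image, Set.mem_image, Finset.mem_coe, Finset.mem_attach,
      true_and] at hx hy
    obtain ⟨a, rfl⟩ := hx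
    obtain ⟨b, rfl⟩ := hy
    exact h.1 a.2 b.2 (fun hab => hxy (by simp [Subtype.ext_iff, hab]))
  · rw [Finset.card_image_of_injective _ (fun a b hab => Subtype.ext (by
      have hv := congrArg Subtype.val hab; exact hv)), Finset.card_attach, h.2]

/-- extending a coloring of `G - S` by one color on a stable set `S` -/
lemma colorable_succ_of_stable (S : Set V) (hS : ∀ a ∈ S, ∀ b ∈ S, ¬G.Adj a b)
    {k : ℕ} (h : (G.induce Sᶜ).Colorable k) : G.Colorable (k + 1) := by
  classical
  obtain ⟨c⟩ := h
  refine ⟨SimpleGraph.Coloring.mk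
    (fun v => if hv : v ∈ S then Fin.last k else (c ⟨v, hv⟩).castSucc) ?_⟩
  intro u v huv
  split_ifs with hu hv hv
  · exact absurd huv (hS u hu v hv)
  · exact fun hc => (Fin.castSucc_lt_last _).ne' hc
  · exact fun hc => (Fin.castSucc_lt_last _).ne hc
  · intro hc
    exact c.valid (show (G.induce Sᶜ).Adj ⟨u, hu⟩ ⟨v, hv⟩ from huv)
      (Fin.castSucc_injective _ hc)
end transfer

section step1
variable {V : Type*} [Fintype V] [Nonempty V] {G : SimpleGraph V}

attribute [local instance] Fintype.ofFinite

lemma chromNum_eq_cliqNum_of_edgeless (h : ∀ a b, ¬G.Adj a b) :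
    chromNum G = cliqNum G := by
  have h1 : chromNum G ≤ 1 := chromNum_le ⟨SimpleGraph.Coloring.mk (fun _ => 0)
    (fun {a b} hab => absurd hab (h a b))⟩
  exact le_antisymm (h1.trans (one_le_cliqNum G)) (cliqNum_le_chromNum G)

lemma exists_adj_of_ne (H2 : chromNum G ≠ cliqNum G) : ∃ a b, G.Adj a b := by
  by_contra h
  push_neg at h
  exact H2 (chromNum_eq_cliqNum_of_edgeless h)

/-- In a minimal imperfect graph, every stable set avoids some maximum clique. -/
lemma exists_clique_avoiding
    (H1 : ∀ W : Set V, W.Nonempty → W ≠ Set.univ →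
      chromNum (G.induce W) = cliqNum (G.induce W))
    (H2 : chromNum G ≠ cliqNum G)
    (S : Set V) (hS : ∀ a ∈ S, ∀ b ∈ S, ¬G.Adj a b) :
    ∃ C : Finset V, G.IsNClique (cliqNum G) C ∧ ∀ x ∈ C, x ∉ S := by
  classical
  rcases Set.eq_empty_or_nonempty S with rfl | hSne
  · obtain ⟨C, hC⟩ := exists_cliqNum G
    exact ⟨C, hC, fun x _ => Set.notMem_empty x⟩
  have hne_univ : Sᶜ ≠ Set.univ := by
    obtain ⟨a, ha⟩ := hSne
    intro h
    have : a ∈ Sᶜ := h ▸ Set.mem_univ a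
    exact this ha
  have hcne : Sᶜ.Nonempty := by
    rcases Set.eq_empty_or_nonempty Sᶜ with hc | hc
    · exfalso
      have hSuniv : S = Set.univ := Set.compl_empty_iff.mp hc
      exact H2 (chromNum_eq_cliqNum_of_edgeless
        (fun a b => hS a (hSuniv ▸ Set.mem_univ a) b (hSuniv ▸ Set.mem_univ b)))
    · exact hc
  have hind := H1 Sᶜ hcne hne_univ
  -- the induced subgraph on Sᶜ has clique number at least cliqNum G
  have hge : cliqNum G ≤ cliqNum (G.induce Sᶜ) := by
    by_contra hlt
    push_neg at hlt
    have hcol : G.Colorable (cliqNum (G.induce Sᶜ) + 1) := by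
      refine colorable_succ_of_stable S hS ?_
      exact hind ▸ colorable_chromNum (G.induce Sᶜ)
    have : chromNum G ≤ cliqNum G :=
      (chromNum_le hcol).trans (Nat.succ_le_of_lt hlt)
    exact H2 (le_antisymm this (cliqNum_le_chromNum G))
  obtain ⟨C', hC'⟩ := exists_cliqNum (G.induce Sᶜ)
  have hC'' := isNClique_of_induce hC'
  obtain ⟨D, hDsub, hDcard⟩ := Finset.exists_subset_card_eq
    (show cliqNum G ≤ (C'.map (Function.Embedding.subtype _)).card by rw [hC''.2]; exact hge)
  refine ⟨D, ⟨hC''.1.subset (by exact_mod_cast hDsub), hDcard⟩, ?_⟩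
  intro x hxD hxS
  have hx : x ∈ C'.map (Function.Embedding.subtype _) := hDsub hxD
  simp only [Finset.mem_map, Function.Embedding.coe_subtype] at hx
  obtain ⟨⟨y, hy⟩, _, rfl⟩ := hx
  exact hy hxS
end step1

section gasparian
variable {V : Type*} [Fintype V] [Nonempty V]

attribute [local instance] Fintype.ofFinite

lemma gasparian (G : SimpleGraph V)
    (H1 : ∀ W : Set V, W.Nonempty → W ≠ Set.univ →
      chromNum (G.induce W) = cliqNum (G.induce W))
    (H2 : chromNum G ≠ cliqNum G) :
    cliqNum Gᶜ * cliqNum G + 1 ≤ Fintype.card V := by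
  classical
  set ω := cliqNum G with hωdef
  set α := cliqNum Gᶜ with hαdef
  have hω1 : 1 ≤ ω := one_le_cliqNum G
  have hα1 : 1 ≤ α := one_le_cliqNum Gᶜ
  obtain ⟨a0, b0, hab0⟩ := exists_adj_of_ne H2
  obtain ⟨A0, hA0⟩ := exists_cliqNum Gᶜ
  have hA0stable : ∀ a ∈ A0, ∀ b ∈ A0, ¬G.Adj a b := by
    intro a ha b hb hadj
    rcases eq_or_ne a b with rfl | hne
    · exact G.loopless.irrefl a hadj
    · exact (hA0.1 (Finset.mem_coe.mpr ha) (Finset.mem_coe.mpr hb) hne).2 hadj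
  set e := Finset.equivFinOfCardEq hA0.2 with hedef
  set v : Fin α → V := fun i => ((e.symm i : ↥A0) : V) with hvdef
  have hvinj : Function.Injective v := fun i j hij =>
    e.symm.injective (Subtype.ext hij)
  have hvmem : ∀ i, v i ∈ A0 := fun i => (e.symm i).2
  have hvsurj : ∀ x ∈ A0, ∃ i, v i = x := fun x hx =>
    ⟨e ⟨x, hx⟩, by simp [hvdef]⟩
  -- the vertex-deleted subgraphs
  set Wser : Fin α → Set V := fun i => {u | u ≠ v i} with hWdef
  have hWne : ∀ i, (Wser i).Nonempty := by
    intro i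
    rcases eq_or_ne a0 (v i) with h | h
    · exact ⟨b0, show b0 ≠ v i from h ▸ (G.ne_of_adj hab0).symm⟩
    · exact ⟨a0, h⟩
  have hWnu : ∀ i, Wser i ≠ Set.univ := by
    intro i h
    have : v i ∈ Wser i := h ▸ Set.mem_univ _
    exact this rfl
  have hωW : ∀ i, cliqNum (G.induce (Wser i)) = ω := by
    intro i
    refine le_antisymm (cliqNum_induce_le _) ?_
    obtain ⟨C, hC, hCav⟩ := exists_clique_avoiding H1 H2 {v i} (by
      intro a ha b hb
      rw [Set.mem_singleton_iff] at ha hb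
      subst ha; subst hb; exact G.loopless.irrefl _)
    obtain ⟨C', hC'⟩ := isNClique_induce_of hC
      (fun x hx => show x ≠ v i from fun hxv => hCav x hx (by rw [hxv]; rfl))
    exact le_cliqNum hC'
  have hcolor : ∀ i, Nonempty ((G.induce (Wser i)).Coloring (Fin ω)) := by
    intro i
    have h1 : chromNum (G.induce (Wser i)) = ω := (H1 _ (hWne i) (hWnu i)).trans (hωW i)
    exact (h1 ▸ colorable_chromNum (G.induce (Wser i)) : (G.induce (Wser i)).Colorable ω)
  set c : ∀ i, (G.induce (Wser i)).Coloring (Fin ω) := fun i => (hcolor i).some with hcdef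
  -- the α·ω+1 stable sets
  set A : Option (Fin α × Fin ω) → Finset V := fun j =>
    Option.elim j A0 (fun p =>
      Finset.univ.filter (fun u => ∃ h : u ≠ v p.1, c p.1 ⟨u, h⟩ = p.2)) with hAdef
  have hmemA : ∀ (i : Fin α) (j0 : Fin ω) (u : V),
      u ∈ A (some (i, j0)) ↔ ∃ h : u ≠ v i, c i ⟨u, h⟩ = j0 := by
    intro i j0 u
    simp [hAdef]
  have hstab : ∀ j, ∀ a ∈ A j, ∀ b ∈ A j, ¬G.Adj a b := by
    rintro (_ | ⟨i, j0⟩) a ha b hb hadj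
    · exact hA0stable a ha b hb hadj
    · rw [hmemA] at ha hb
      obtain ⟨ha', hca⟩ := ha
      obtain ⟨hb', hcb⟩ := hb
      exact (c i).valid (show (G.induce (Wser i)).Adj ⟨a, ha'⟩ ⟨b, hb'⟩ from hadj)
        (hca.trans hcb.symm)
  -- cliques avoiding each stable set
  have hCex : ∀ j, ∃ C : Finset V, G.IsNClique ω C ∧ ∀ x ∈ C, x ∉ A j := by
    intro j
    obtain ⟨C, h1, h2⟩ := exists_clique_avoiding H1 H2 (↑(A j)) (by
      intro a ha b hb
      exact hstab j a (Finset.mem_coe.mp ha) b (Finset.mem_coe.mp hb))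
    exact ⟨C, h1, fun x hx hxA => h2 x hx (Finset.mem_coe.mpr hxA)⟩
  choose C hC1 hC2 using hCex
  -- counting lemmas
  have hle1 : ∀ (D : Finset V), G.IsClique (↑D) → ∀ j, (D ∩ A j).card ≤ 1 := by
    intro D hD j
    by_contra h
    push_neg at h
    obtain ⟨x, hx, y, hy, hxy⟩ := Finset.one_lt_card.mp h
    rw [Finset.mem_inter] at hx hy
    exact hstab j x hx.2 y hy.2
      (hD (Finset.mem_coe.mpr hx.1) (Finset.mem_coe.mpr hy.1) hxy)
  have hsum : ∀ D : Finset V, G.IsNClique ω D → ∑ j, (D ∩ A j).card = α * ω := by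
    intro D hD
    have hsum_i : ∀ i : Fin α,
        (∑ j0 : Fin ω, (D ∩ A (some (i, j0))).card) + (if v i ∈ D then 1 else 0) = ω := by
      intro i
      have h1 : ∀ j0 : Fin ω, (D ∩ A (some (i, j0))).card
          = ∑ u ∈ D, if u ∈ A (some (i, j0)) then 1 else 0 := by
        intro j0
        rw [← Finset.filter_mem_eq_inter, Finset.card_filter]
      have hpt : ∀ u ∈ D,
          (∑ j0 : Fin ω, if u ∈ A (some (i, j0)) then 1 else 0)
            + (if u = v i then 1 else 0) = 1 := by
        intro u _
        rcases eq_or_ne u (v i) with h | h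
        · rw [if_pos h]
          have hz : ∀ j0 : Fin ω, (if u ∈ A (some (i, j0)) then (1:ℕ) else 0) = 0 := by
            intro j0
            refine if_neg (fun hu => ?_)
            obtain ⟨h', _⟩ := (hmemA i j0 u).mp hu
            exact h' h
          rw [Finset.sum_congr rfl (fun j0 _ => hz j0), Finset.sum_const, smul_zero, zero_add]
        · rw [if_neg h]
          have heq : ∀ j0 : Fin ω, (u ∈ A (some (i, j0))) = (c i ⟨u, h⟩ = j0) := fun j0 =>
            propext ((hmemA i j0 u).trans ⟨fun ⟨_, hc⟩ => hc, fun hc => ⟨h, hc⟩⟩)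
          simp only [heq]
          simp [Finset.sum_ite_eq]
      calc (∑ j0 : Fin ω, (D ∩ A (some (i, j0))).card) + (if v i ∈ D then 1 else 0)
          = (∑ j0 : Fin ω, ∑ u ∈ D, if u ∈ A (some (i, j0)) then 1 else 0)
            + ∑ u ∈ D, (if u = v i then 1 else 0) := by
            congr 1
            · exact Finset.sum_congr rfl fun j0 _ => h1 j0
            · rw [Finset.sum_ite_eq' D (v i) (fun _ => (1:ℕ))]
        _ = ∑ u ∈ D, ((∑ j0 : Fin ω, if u ∈ A (some (i, j0)) then 1 else 0)
            + (if u = v i then 1 else 0)) := by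
            rw [Finset.sum_comm, Finset.sum_add_distrib]
        _ = ∑ _u ∈ D, 1 := Finset.sum_congr rfl hpt
        _ = ω := by rw [Finset.sum_const, smul_eq_mul, mul_one, hD.2]
    have hA0card : (D ∩ A none).card = ∑ i : Fin α, (if v i ∈ D then 1 else 0) := by
      have himg : D ∩ A none = (Finset.univ.filter (fun i : Fin α => v i ∈ D)).image v := by
        ext x
        simp only [Finset.mem_inter, Finset.mem_image, Finset.mem_filter, Finset.mem_univ,
          true_and]
        constructor
        · rintro ⟨hxD, hxA⟩
          obtain ⟨i, rfl⟩ := hvsurj x hxA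
          exact ⟨i, hxD, rfl⟩
        · rintro ⟨i, hiD, rfl⟩
          exact ⟨hiD, hvmem i⟩
      rw [himg, Finset.card_image_of_injective _ hvinj, Finset.card_filter]
    calc ∑ j, (D ∩ A j).card
        = (D ∩ A none).card + ∑ p : Fin α × Fin ω, (D ∩ A (some p)).card := by
          rw [Fintype.sum_option]
      _ = ∑ i : Fin α, ((if v i ∈ D then 1 else 0)
            + ∑ j0 : Fin ω, (D ∩ A (some (i, j0))).card) := by
          rw [hA0card, Fintype.sum_prod_type, ← Finset.sum_add_distrib]
      _ = ∑ _i : Fin α, ω := Finset.sum_congr rfl (fun i _ => by rw [add_comm]; exact hsum_i i)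
      _ = α * ω := by rw [Finset.sum_const, smul_eq_mul, Finset.card_univ, Fintype.card_fin]
  -- the matrix identities
  have hzero : ∀ k, (C k ∩ A k).card = 0 := by
    intro k
    rw [Finset.card_eq_zero, Finset.eq_empty_iff_forall_notMem]
    intro x hx
    rw [Finset.mem_inter] at hx
    exact hC2 k x hx.1 hx.2
  have hcardJ : Fintype.card (Option (Fin α × Fin ω)) = α * ω + 1 := by simp
  have hone : ∀ k j, j ≠ k → (C k ∩ A j).card = 1 := by
    intro k j hjk
    by_contra hne
    have hle := hle1 (C k) (hC1 k).1 j
    have hsumk := hsum (C k) (hC1 k)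
    have h1 : ∑ j', (C k ∩ A j').card
        = (C k ∩ A k).card + ∑ j' ∈ Finset.univ.erase k, (C k ∩ A j').card :=
      (Finset.add_sum_erase _ _ (Finset.mem_univ k)).symm
    have hlt : ∑ j' ∈ Finset.univ.erase k, (C k ∩ A j').card
        < ∑ _j' ∈ Finset.univ.erase k, 1 := by
      apply Finset.sum_lt_sum
      · intro x _; exact hle1 (C k) (hC1 k).1 x
      · exact ⟨j, Finset.mem_erase.mpr ⟨hjk, Finset.mem_univ j⟩,
          by have := hle1 (C k) (hC1 k).1 j; omega⟩
    have hcard : ∑ _j' ∈ Finset.univ.erase k, (1:ℕ) = α * ω := by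
      rw [Finset.sum_const, smul_eq_mul, mul_one,
        Finset.card_erase_of_mem (Finset.mem_univ k), Finset.card_univ, hcardJ,
        Nat.add_sub_cancel]
    have hj0 : (C k ∩ A j).card = 0 := by omega
    linarith [hsumk, h1, hzero k, hlt, hcard]
  -- linear independence of the stable set indicator vectors
  have key : Fintype.card (Option (Fin α × Fin ω)) ≤ Fintype.card V := by
    have hli : LinearIndependent ℚ
        (fun j : Option (Fin α × Fin ω) => (fun u => if u ∈ A j then (1:ℚ) else 0 : V → ℚ)) := by
      rw [Fintype.linearIndependent_iff]
      intro g hg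
      have hpt : ∀ u : V, ∑ j, g j * (if u ∈ A j then (1:ℚ) else 0) = 0 := by
        intro u
        have := congrFun hg u
        simpa [Finset.sum_apply] using this
      have hdot : ∀ k, ∑ j, g j * (((C k ∩ A j).card : ℕ) : ℚ) = 0 := by
        intro k
        have hcast : ∀ j, (((C k ∩ A j).card : ℕ) : ℚ)
            = ∑ u ∈ C k, (if u ∈ A j then (1:ℚ) else 0) := by
          intro j
          rw [Finset.sum_boole, ← Finset.filter_mem_eq_inter]
        calc ∑ j, g j * (((C k ∩ A j).card : ℕ) : ℚ)
            = ∑ j, ∑ u ∈ C k, g j * (if u ∈ A j then (1:ℚ) else 0) := by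
              refine Finset.sum_congr rfl fun j _ => ?_
              rw [hcast j, Finset.mul_sum]
          _ = ∑ u ∈ C k, ∑ j, g j * (if u ∈ A j then (1:ℚ) else 0) := Finset.sum_comm
          _ = 0 := by
              rw [Finset.sum_congr rfl (fun u _ => hpt u), Finset.sum_const, smul_zero]
      have hgk : ∀ k, g k = ∑ j, g j := by
        intro k
        have hentry : ∀ j, g j * (((C k ∩ A j).card : ℕ) : ℚ)
            = if j = k then 0 else g j := by
          intro j
          by_cases h : j = k
          · subst h; rw [hzero j]; simp
          · rw [hone k j h]; simp [h]
        have h2 := hdot k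
        rw [Finset.sum_congr rfl (fun j _ => hentry j)] at h2
        have h3 : ∑ j, (if j = k then 0 else g j)
            = (∑ j, g j) - ∑ j, (if j = k then g j else 0) := by
          rw [← Finset.sum_sub_distrib]
          refine Finset.sum_congr rfl fun j _ => ?_
          by_cases h : j = k <;> simp [h]
        rw [h3, Finset.sum_ite_eq' Finset.univ k g, if_pos (Finset.mem_univ k)] at h2
        linarith
      have hS : (∑ j, g j) = (Fintype.card (Option (Fin α × Fin ω)) : ℚ) * ∑ j, g j := by
        calc ∑ j, g j = ∑ _j : Option (Fin α × Fin ω), ∑ j, g j :=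
              Finset.sum_congr rfl fun j _ => hgk j
          _ = _ := by rw [Finset.sum_const, Finset.card_univ, nsmul_eq_mul]
      have hS0 : (∑ j, g j) = 0 := by
        have h2 : ((Fintype.card (Option (Fin α × Fin ω)) : ℚ) - 1) * ∑ j, g j = 0 := by
          linear_combination -hS
        rcases mul_eq_zero.mp h2 with h | h
        · exfalso
          have hc1 : (Fintype.card (Option (Fin α × Fin ω)) : ℚ) = 1 := by linarith
          have hc2 : Fintype.card (Option (Fin α × Fin ω)) = 1 := by exact_mod_cast hc1
          rw [hcardJ] at hc2
          have h4 : α * ω = 0 := by exact Nat.succ_injective hc2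
          rcases Nat.mul_eq_zero.mp h4 with h5 | h5 <;> omega
        · exact h
      intro j
      rw [hgk j, hS0]
    have h := hli.fintype_card_le_finrank
    rwa [Module.finrank_fintype_fun_eq_card] at h
  rw [hcardJ] at key
  exact key
end gasparian

/-- A graph on ℕ is perfect if on every nonempty finite induced subgraph the chromatic
number equals the clique number. -/
def IsPerfect (G : SimpleGraph ℕ) : Prop :=
  ∀ H : Finset ℕ, H.Nonempty →
    chromNum (G.induce (H : Set ℕ)) = cliqNum (G.induce (H : Set ℕ))

section final
attribute [local instance] Fintype.ofFinite

/-- The perfect graph theorem: the complement of a perfect graph is perfect. -/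
theorem stmt_6 (G : SimpleGraph ℕ) (hG : IsPerfect G) : IsPerfect Gᶜ := by
  classical
  suffices h : ∀ n : ℕ, ∀ H : Finset ℕ, H.card = n → H.Nonempty →
      chromNum (Gᶜ.induce (H : Set ℕ)) = cliqNum (Gᶜ.induce (H : Set ℕ)) by
    intro H hH
    exact h H.card H rfl hH
  intro n
  induction n using Nat.strong_induction_on with
  | _ n IH =>
    intro H hn hH
    by_contra hne
    haveI hne' : Nonempty ↥(H : Set ℕ) :=
      ⟨⟨hH.choose, Finset.mem_coe.mpr hH.choose_spec⟩⟩
    have H1 : ∀ W : Set ↥(H : Set ℕ), W.Nonempty → W ≠ Set.univ →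
        chromNum ((Gᶜ.induce (H : Set ℕ)).induce W)
          = cliqNum ((Gᶜ.induce (H : Set ℕ)).induce W) := by
      intro W hWne hWnu
      have hSfin : (Subtype.val '' W : Set ℕ).Finite := Set.toFinite _
      set H' : Finset ℕ := hSfin.toFinset with hH'def
      have hcoe : (H' : Set ℕ) = Subtype.val '' W := hSfin.coe_toFinset
      have hiso := induceInduceIso Gᶜ (H : Set ℕ) W
      have hlt : H'.card < n := by
        rw [← hn]
        apply Finset.card_lt_card
        constructor
        · intro x hx
          have hx' : x ∈ (Subtype.val '' W : Set ℕ) := by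
            rw [← hcoe]; exact_mod_cast hx
          obtain ⟨y, _, rfl⟩ := hx'
          exact_mod_cast y.2
        · intro hsub
          obtain ⟨y, hy⟩ := Set.ne_univ_iff_exists_notMem W |>.mp hWnu
          have hyH : (y : ℕ) ∈ H := by exact_mod_cast y.2
          have : (y : ℕ) ∈ H' := hsub hyH
          have : (y : ℕ) ∈ (Subtype.val '' W : Set ℕ) := by rw [← hcoe]; exact_mod_cast this
          obtain ⟨z, hz, hzy⟩ := this
          exact hy (Subtype.val_injective hzy ▸ hz)
      have hH'ne : H'.Nonempty := by
        obtain ⟨w, hw⟩ := hWne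
        refine ⟨(w : ℕ), ?_⟩
        rw [← Finset.mem_coe, hcoe]
        exact ⟨w, hw, rfl⟩
      have hIH := IH H'.card hlt H' rfl hH'ne
      rw [chromNum_eq_of_iso hiso, cliqNum_eq_of_iso hiso]
      have e2 := induceSetCongrIso Gᶜ hcoe
      rw [← chromNum_eq_of_iso e2, ← cliqNum_eq_of_iso e2]
      exact hIH
    have hgasp := gasparian (Gᶜ.induce (H : Set ℕ)) H1 hne
    have hcompl : (Gᶜ.induce (H : Set ℕ))ᶜ = G.induce (H : Set ℕ) := by
      rw [← compl_induce, compl_compl]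
    have hcard := card_le_chromNum_mul_cliqNum_compl ((Gᶜ.induce (H : Set ℕ))ᶜ)
    rw [compl_compl, hcompl, hG H hH] at hcard
    rw [hcompl] at hgasp
    linarith
end final
end

section
/- For every n ∈ ℕ the Schreier family 𝓢_n of order n admits an emulation with increasingly ordered intervals; consequently, for every n there exist an injection θ : ℕ → ℚ and indicator functions x_k of pairwise disjoint nonempty finite intervals in ℕ such that for every finitely supported a : ℕ → ℝ, ‖Σ_k a(k)·x_k‖_θ = ‖a‖_{𝓢_n} — i.e., the Sierpiński space contains an isometric copy of each Schreier space of finite order. -/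
open scoped ENNReal

/-- A finite set of naturals is an interval. -/
def IsIntervalN (S : Finset ℕ) : Prop :=
  ∀ a ∈ S, ∀ b ∈ S, ∀ c, a ≤ c → c ≤ b → c ∈ S

/-- The family of finite sets on which the injection `θ : ℕ → ℚ` is strictly
increasing (the finite cliques of the graph generated by `θ`). -/
def sierCliquesQ (θ : ℕ → ℚ) : Set (Finset ℕ) :=
  {S | StrictMonoOn θ (S : Set ℕ)}

/-- The pair `((I_t)_{t ∈ Ω}, θ)` emulates the family `F`. -/
def Emulates {Ω : Type*} (I : Ω → Finset ℕ) (θ : ℕ → ℚ) (F : Set (Finset Ω)) : Prop :=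
  (∀ t, (I t).Nonempty) ∧ (∀ t, IsIntervalN (I t)) ∧
  (∀ s t, s ≠ t → Disjoint (I s) (I t)) ∧ Function.Injective θ ∧
  ∀ E : Finset Ω,
    combNorm (sierCliquesQ θ) (fun i => ∑ t ∈ E, if i ∈ I t then (1 : ℝ) else 0) =
      (E.card : ℝ≥0∞) ↔ E ∈ F

/-- The Schreier operation on families of finite subsets of `ℕ+ = {1,2,3, …}`. -/
def SchreierOp (F : Set (Finset ℕ+)) : Set (Finset ℕ+) :=
  {E | E = ∅ ∨ ∃ (m : ℕ) (hm : 0 < m) (Fs : Fin m → Finset ℕ+),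
    (∀ k, Fs k ∈ F ∧ (Fs k).Nonempty) ∧
    (∀ k l : Fin m, k < l → ∀ a ∈ Fs k, ∀ b ∈ Fs l, a < b) ∧
    (∀ a ∈ Fs ⟨0, hm⟩, m ≤ (a : ℕ)) ∧
    E = Finset.univ.biUnion Fs}

/-- The Schreier families of finite order: `𝓢₀ = [ℕ]^{≤1}`, `𝓢_{n+1} = 𝐒(𝓢_n)`. -/
def Schreier : ℕ → Set (Finset ℕ+)
  | 0 => {F | F.card ≤ 1}
  | n + 1 => SchreierOp (Schreier n)


/-- squash ℚ into (0,1), strictly monotone. -/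
def sig (v : ℚ) : ℚ := 1/2 + v/(2*(1+|v|))

lemma sig_pos (v : ℚ) : 0 < sig v := by
  have h1 : (0:ℚ) < 1 + |v| := by positivity
  have h2 : |v| < 1 + |v| := by linarith
  have : -(1/2 : ℚ) < v/(2*(1+|v|)) := by
    rw [neg_lt, ← neg_div]
    rw [div_lt_div_iff₀ (by positivity) (by norm_num)]
    have := neg_abs_le v
    nlinarith
  unfold sig; linarith

lemma sig_lt_one (v : ℚ) : sig v < 1 := by
  have h1 : (0:ℚ) < 1 + |v| := by positivity
  have : v/(2*(1+|v|)) < 1/2 := by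
    rw [div_lt_div_iff₀ (by positivity) (by norm_num)]
    have := le_abs_self v
    nlinarith
  unfold sig; linarith

lemma sig_strictMono : StrictMono sig := by
  intro v w hvw
  have h1 : (0:ℚ) < 1 + |v| := by positivity
  have h2 : (0:ℚ) < 1 + |w| := by positivity
  have : v/(2*(1+|v|)) < w/(2*(1+|w|)) := by
    rw [div_lt_div_iff₀ (by positivity) (by positivity)]
    rcases le_or_gt 0 v with hv | hv <;> rcases le_or_gt 0 w with hw | hw
    · rw [abs_of_nonneg hv, abs_of_nonneg hw]; nlinarith
    · exfalso; linarith
    · rw [abs_of_neg hv, abs_of_nonneg hw]; nlinarith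
    · rw [abs_of_neg hv, abs_of_neg hw]; nlinarith
  unfold sig; linarith

/-- key order lemma -/
lemma key_lt {r r' : ℕ} {v v' : ℚ} :
    -(r:ℚ) + sig v < -(r':ℚ) + sig v' ↔ r' < r ∨ (r = r' ∧ v < v') := by
  rcases lt_trichotomy r r' with h | h | h
  · constructor
    · intro hlt
      exfalso
      have h1 : (r:ℚ) + 1 ≤ r' := by exact_mod_cast Nat.succ_le_of_lt h
      have := sig_pos v; have := sig_lt_one v'
      linarith
    · rintro (h' | ⟨h', _⟩) <;> omega
  · subst h
    constructor
    · intro hs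
      have : sig v < sig v' := by linarith
      exact Or.inr ⟨rfl, sig_strictMono.lt_iff_lt.mp this⟩
    · rintro (h' | ⟨_, hv⟩)
      · omega
      · have := sig_strictMono hv; linarith
  · constructor
    · intro _; exact Or.inl h
    · intro _
      have h1 : (r':ℚ) + 1 ≤ r := by exact_mod_cast Nat.succ_le_of_lt h
      have := sig_pos v'; have := sig_lt_one v
      linarith
/-- value sets -/
def Vn : ℕ → ℕ+ → Finset ℚ
  | 0, k => {-(k:ℚ)}
  | (n+1), k => (Finset.Icc 1 (k:ℕ) ×ˢ Vn n k).image fun p => -(p.1:ℚ) + sig p.2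

lemma Vn_nonempty (n : ℕ) (k : ℕ+) : (Vn n k).Nonempty := by
  induction n with
  | zero => exact ⟨-(k:ℚ), by simp [Vn]⟩
  | succ n ih =>
    obtain ⟨v, hv⟩ := ih
    exact ⟨-(1:ℕ) + sig v, Finset.mem_image.2 ⟨(1, v),
      Finset.mem_product.2 ⟨Finset.mem_Icc.2 ⟨le_refl 1, k.one_le⟩, hv⟩, rfl⟩⟩

lemma Vn_mem_succ {n : ℕ} {k : ℕ+} {q : ℚ} :
    q ∈ Vn (n+1) k ↔ ∃ r : ℕ, ∃ v : ℚ, 1 ≤ r ∧ r ≤ (k:ℕ) ∧ v ∈ Vn n k ∧ q = -(r:ℚ) + sig v := by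
  constructor
  · intro h
    obtain ⟨⟨r, v⟩, hp, he⟩ := Finset.mem_image.1 h
    obtain ⟨hr, hv⟩ := Finset.mem_product.1 hp
    obtain ⟨hr1, hr2⟩ := Finset.mem_Icc.1 hr
    exact ⟨r, v, hr1, hr2, hv, he.symm⟩
  · rintro ⟨r, v, h1, h2, h3, rfl⟩
    exact Finset.mem_image.2 ⟨(r, v), Finset.mem_product.2 ⟨Finset.mem_Icc.2 ⟨h1, h2⟩, h3⟩, rfl⟩

lemma Vn_disjoint : ∀ n (k k' : ℕ+) (v : ℚ), v ∈ Vn n k → v ∈ Vn n k' → k = k' := by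
  intro n
  induction n with
  | zero =>
    intro k k' v h h'
    simp only [Vn, Finset.mem_singleton] at h h'
    have : (k:ℚ) = (k':ℚ) := by rw [h] at h'; linarith [neg_injective h'] -- fallback
    exact_mod_cast this
  | succ n ih =>
    intro k k' q h h'
    obtain ⟨r, v, _, _, hv, rfl⟩ := Vn_mem_succ.1 h
    obtain ⟨r', v', _, _, hv', he⟩ := Vn_mem_succ.1 h'
    have h1 : ¬ (r' < r ∨ (r = r' ∧ v < v')) := fun hc => (he ▸ key_lt.2 hc).false
    have h2 : ¬ (r < r' ∨ (r' = r ∧ v' < v)) := fun hc => (he ▸ key_lt.2 hc).false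
    push_neg at h1 h2
    have hr : r = r' := by omega
    subst hr
    have hrr : v = v' := le_antisymm (h2.2 rfl) (h1.2 rfl)
    exact ih k k' v hv (hrr ▸ hv')

lemma schreier_iff_transversal : ∀ n (F : Finset ℕ+),
    F ∈ Schreier n ↔ ∃ f : ℕ+ → ℚ, (∀ k ∈ F, f k ∈ Vn n k) ∧ StrictMonoOn f (F : Set ℕ+) := by
  intro n
  induction n with
  | zero =>
    intro F
    constructor
    · intro h
      refine ⟨fun k => -(k:ℚ), fun k _ => by simp [Vn], ?_⟩
      intro a ha b hb hab
      exfalso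
      have h1 : 1 < F.card := Finset.one_lt_card.2 ⟨a, ha, b, hb, ne_of_lt hab⟩
      have hc : F.card ≤ 1 := h
      omega
    · rintro ⟨f, hf, hmono⟩
      show F.card ≤ 1
      by_contra hc
      push_neg at hc
      obtain ⟨a, ha, b, hb, hab⟩ := Finset.one_lt_card.1 hc
      have hfa : f a = -(a:ℚ) := Finset.mem_singleton.1 (hf a ha)
      have hfb : f b = -(b:ℚ) := Finset.mem_singleton.1 (hf b hb)
      rcases lt_or_gt_of_ne hab with h' | h'
      · have := hmono ha hb h'
        rw [hfa, hfb] at this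
        have : (b:ℚ) < a := by linarith
        have : b < a := by exact_mod_cast this
        exact absurd h' (not_lt.2 this.le)
      · have := hmono hb ha h'
        rw [hfa, hfb] at this
        have : (a:ℚ) < b := by linarith
        have : a < b := by exact_mod_cast this
        exact absurd h' (not_lt.2 this.le)
  | succ n ih =>
    intro F
    constructor
    · rintro (hF | ⟨m, hm, Fs, hmem, hord, hmin, hE⟩)
      · subst hF
        exact ⟨fun _ => 0, by simp, by simp [StrictMonoOn]⟩
      · have hch : ∀ k : Fin m, ∃ g : ℕ+ → ℚ,
            (∀ x ∈ Fs k, g x ∈ Vn n x) ∧ StrictMonoOn g (Fs k : Set ℕ+) :=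
          fun k => (ih (Fs k)).1 (hmem k).1
        choose g hg1 hg2 using hch
        have huniq : ∀ (x : ℕ+) (k l : Fin m), x ∈ Fs k → x ∈ Fs l → k = l := by
          intro x k l hk hl
          by_contra hne
          rcases Ne.lt_or_gt hne with h' | h'
          · exact lt_irrefl x (hord k l h' x hk x hl)
          · exact lt_irrefl x (hord l k h' x hl x hk)
        classical
        set f : ℕ+ → ℚ := fun x =>
          if h : ∃ k : Fin m, x ∈ Fs k then
            -((m - (h.choose : ℕ) : ℕ) : ℚ) + sig (g h.choose x) else 0 with hfdef
        have hmemF : ∀ x ∈ F, ∃ k : Fin m, x ∈ Fs k := by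
          intro x hx
          rw [hE] at hx
          obtain ⟨k, _, hk⟩ := Finset.mem_biUnion.1 hx
          exact ⟨k, hk⟩
        have hfval : ∀ (x : ℕ+) (k : Fin m), x ∈ Fs k →
            f x = -((m - (k:ℕ) : ℕ) : ℚ) + sig (g k x) := by
          intro x k hk
          have hex : ∃ k : Fin m, x ∈ Fs k := ⟨k, hk⟩
          have hck : hex.choose = k := huniq x _ _ hex.choose_spec hk
          rw [hfdef]
          simp only [dif_pos hex, hck]
        have hm_le : ∀ (k : Fin m), ∀ x ∈ Fs k, m ≤ (x:ℕ) := by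
          intro k x hx
          by_cases h0 : (k:ℕ) = 0
          · have hk0 : k = ⟨0, hm⟩ := Fin.ext h0
            exact hmin x (hk0 ▸ hx)
          · obtain ⟨a, ha⟩ := (hmem ⟨0,hm⟩).2
            have hlt : (⟨0,hm⟩ : Fin m) < k := by
              rw [Fin.lt_def]
              exact Nat.pos_of_ne_zero h0
            have hax : a < x := hord _ _ hlt a ha x hx
            have hma : m ≤ (a:ℕ) := hmin a ha
            have : (a:ℕ) < (x:ℕ) := hax
            omega
        refine ⟨f, ?_, ?_⟩
        · intro x hx
          obtain ⟨k, hk⟩ := hmemF x hx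
          rw [hfval x k hk]
          refine Vn_mem_succ.2 ⟨m - k, g k x, ?_, ?_, hg1 k x hk, rfl⟩
          · have := k.isLt; omega
          · have := hm_le k x hk; have := k.isLt; omega
        · intro x hx y hy hxy
          have hx' : x ∈ F := hx
          have hy' : y ∈ F := hy
          obtain ⟨k, hk⟩ := hmemF x hx'
          obtain ⟨l, hl⟩ := hmemF y hy'
          rw [hfval x k hk, hfval y l hl]
          rcases lt_trichotomy k l with h' | h' | h'
          · refine key_lt.2 (Or.inl ?_)
            have h1 : (k:ℕ) < (l:ℕ) := h'
            have := l.isLt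
            omega
          · subst h'
            exact key_lt.2 (Or.inr ⟨rfl, hg2 k hk hl hxy⟩)
          · exact absurd (hord l k h' y hl x hk) (not_lt.2 hxy.le)
    · rintro ⟨f, hf, hmono⟩
      by_cases hF : F = ∅
      · exact Or.inl hF
      right
      classical
      have hex : ∀ x ∈ F, ∃ r : ℕ, ∃ v : ℚ,
          1 ≤ r ∧ r ≤ (x:ℕ) ∧ v ∈ Vn n x ∧ f x = -(r:ℚ) + sig v :=
        fun x hx => Vn_mem_succ.1 (hf x hx)
      choose! r v hr1 hr2 hv hfx using hex
      have hcomp : ∀ x ∈ F, ∀ y ∈ F, x < y → r y < r x ∨ (r x = r y ∧ v x < v y) := by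
        intro x hx y hy hxy
        have h := hmono hx hy hxy
        rw [hfx x hx, hfx y hy] at h
        exact key_lt.1 h
      set R : Finset ℕ := F.image r with hR
      have hRne : R.Nonempty := (Finset.nonempty_iff_ne_empty.2 hF).image r
      set m := R.card with hmdef
      have hm : 0 < m := Finset.card_pos.2 hRne
      set e := R.orderIsoOfFin (rfl : R.card = m) with he
      set val : Fin m → ℕ := fun i => (e i.rev : ℕ) with hval
      set Fs : Fin m → Finset ℕ+ := fun i => F.filter (fun x => r x = val i) with hFs
      have hvalmem : ∀ i, val i ∈ R := fun i => (e i.rev).2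
      have hvalanti : ∀ i j : Fin m, i < j → val j < val i := by
        intro i j hij
        have : j.rev < i.rev := by
          rw [Fin.lt_def]
          simp only [Fin.val_rev]
          have := i.isLt; have := j.isLt
          have : (i:ℕ) < (j:ℕ) := hij
          omega
        exact Subtype.coe_lt_coe.2 (e.lt_iff_lt.2 this)
      have hFsne : ∀ k, (Fs k).Nonempty := by
        intro k
        obtain ⟨x, hx, hrx⟩ := Finset.mem_image.1 (hvalmem k)
        exact ⟨x, Finset.mem_filter.2 ⟨hx, hrx⟩⟩
      refine ⟨m, hm, Fs, ?_, ?_, ?_, ?_⟩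
      · intro k
        refine ⟨(ih (Fs k)).2 ⟨v, fun x hx => hv x (Finset.mem_filter.1 hx).1, ?_⟩, hFsne k⟩
        intro x hx y hy hxy
        have hx' := Finset.mem_filter.1 hx
        have hy' := Finset.mem_filter.1 hy
        rcases hcomp x hx'.1 y hy'.1 hxy with h' | h'
        · exfalso; rw [hx'.2, hy'.2] at h'; exact lt_irrefl _ h'
        · exact h'.2
      · intro k l hkl a ha b hb
        have ha' := Finset.mem_filter.1 ha
        have hb' := Finset.mem_filter.1 hb
        have hvl : r b < r a := by
          rw [ha'.2, hb'.2]; exact hvalanti k l hkl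
        rcases lt_trichotomy a b with h' | h' | h'
        · exact h'
        · exfalso; rw [h'] at hvl; exact lt_irrefl _ hvl
        · exfalso
          rcases hcomp b hb'.1 a ha'.1 h' with h'' | h''
          · omega
          · omega
      · intro a ha
        have ha' := Finset.mem_filter.1 ha
        have hsub : R ⊆ Finset.Icc 1 (val ⟨0, hm⟩) := by
          intro b hb
          obtain ⟨x, hx, hrx⟩ := Finset.mem_image.1 hb
          refine Finset.mem_Icc.2 ⟨hrx ▸ hr1 x hx, ?_⟩
          obtain ⟨j, hj⟩ := e.surjective ⟨b, hb⟩
          have hjle : j ≤ (⟨0, hm⟩ : Fin m).rev := by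
            rw [Fin.le_def]
            simp only [Fin.val_rev]
            have := j.isLt
            omega
          have : (e j : ℕ) ≤ val ⟨0, hm⟩ :=
            Subtype.coe_le_coe.2 (e.le_iff_le.2 hjle)
          rw [hj] at this
          exact this
        have hcard : m ≤ val ⟨0, hm⟩ := by
          have := Finset.card_le_card hsub
          rw [Nat.card_Icc] at this
          omega
        have : r a ≤ (a:ℕ) := hr2 a ha'.1
        rw [ha'.2] at this
        omega
      · ext x
        simp only [Finset.mem_biUnion, Finset.mem_univ, true_and]
        constructor
        · intro hx
          have hrx : r x ∈ R := Finset.mem_image_of_mem r hx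
          obtain ⟨j, hj⟩ := e.surjective ⟨r x, hrx⟩
          refine ⟨j.rev, Finset.mem_filter.2 ⟨hx, ?_⟩⟩
          have : val j.rev = (e j.rev.rev : ℕ) := rfl
          rw [this, Fin.rev_rev, hj]
        · rintro ⟨k, hk⟩
          exact (Finset.mem_filter.1 hk).1

section Construction
variable (n : ℕ)

def W (j : ℕ) : Finset ℚ := Vn n ⟨j+1, Nat.succ_pos j⟩
def cst (j : ℕ) : ℕ := (W n j).card
lemma cst_pos (j : ℕ) : 0 < cst n j := Finset.card_pos.2 (Vn_nonempty n _)

def st (j : ℕ) : ℕ := ∑ i ∈ Finset.range j, cst n i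
lemma st_succ (j : ℕ) : st n (j+1) = st n j + cst n j := Finset.sum_range_succ _ j
lemma st_zero : st n 0 = 0 := rfl
lemma st_mono : Monotone (st n) := by
  intro a b hab
  exact Finset.sum_le_sum_of_subset (Finset.range_subset_range.2 hab)
lemma le_st (j : ℕ) : j ≤ st n j := by
  induction j with
  | zero => simp [st]
  | succ j ih => rw [st_succ]; have := cst_pos n j; omega

def blk (i : ℕ) : ℕ := Nat.findGreatest (fun j => st n j ≤ i) i

lemma blk_le (i : ℕ) : st n (blk n i) ≤ i :=
  Nat.findGreatest_spec (P := fun j => st n j ≤ i) (Nat.zero_le i) (by simp [st])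

lemma blk_lt (i : ℕ) : i < st n (blk n i + 1) := by
  by_contra h
  push_neg at h
  have h1 : blk n i + 1 ≤ i := le_trans (le_st n _) h
  have h2 : blk n i + 1 ≤ blk n i :=
    Nat.le_findGreatest (P := fun j => st n j ≤ i) h1 h
  omega

lemma blk_eq {i j : ℕ} (h1 : st n j ≤ i) (h2 : i < st n (j+1)) : blk n i = j := by
  have hle : j ≤ blk n i :=
    Nat.le_findGreatest (le_trans (le_st n j) h1) h1
  have : blk n i < j + 1 := by
    by_contra hc
    push_neg at hc
    have := st_mono n hc
    have := blk_le n i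
    omega
  omega

lemma blk_mono : Monotone (blk n) := by
  intro a b hab
  exact Nat.le_findGreatest (le_trans (le_trans (le_st n _) (blk_le n a)) hab)
    (le_trans (blk_le n a) hab)

def Iv (k : ℕ+) : Finset ℕ := Finset.Ico (st n k.natPred) (st n (k.natPred + 1))

def K (i : ℕ) : ℕ+ := ⟨blk n i + 1, Nat.succ_pos _⟩

lemma natPred_succ (k : ℕ+) : ((⟨k.natPred + 1, Nat.succ_pos _⟩ : ℕ+) : ℕ+) = k := by
  apply PNat.coe_injective
  exact k.natPred_add_one

lemma K_natPred (i : ℕ) : (K n i).natPred = blk n i := rfl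

lemma mem_Iv_iff {i : ℕ} {k : ℕ+} : i ∈ Iv n k ↔ K n i = k := by
  constructor
  · intro h
    obtain ⟨h1, h2⟩ := Finset.mem_Ico.1 h
    have : blk n i = k.natPred := blk_eq n h1 h2
    rw [← natPred_succ k]
    apply PNat.coe_injective
    simp [K, this, PNat.natPred]
  · rintro rfl
    exact Finset.mem_Ico.2 ⟨blk_le n i, blk_lt n i⟩

lemma mem_Iv_self (i : ℕ) : i ∈ Iv n (K n i) := (mem_Iv_iff n).2 rfl

lemma W_K (i : ℕ) : W n (blk n i) = Vn n (K n i) := rfl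

lemma Iv_ordered {k m : ℕ+} (h : k < m) {a b : ℕ} (ha : a ∈ Iv n k) (hb : b ∈ Iv n m) :
    a < b := by
  obtain ⟨_, ha2⟩ := Finset.mem_Ico.1 ha
  obtain ⟨hb1, _⟩ := Finset.mem_Ico.1 hb
  have hk : k.natPred + 1 ≤ m.natPred := by
    have h1 : (k:ℕ) < (m:ℕ) := h
    have h2 : k.natPred + 1 = (k:ℕ) := k.natPred_add_one
    have h3 : m.natPred + 1 = (m:ℕ) := m.natPred_add_one
    omega
  exact lt_of_lt_of_le ha2 (le_trans (st_mono n hk) hb1)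

noncomputable def theta (i : ℕ) : ℚ :=
  ((W n (blk n i)).orderIsoOfFin (rfl : (W n (blk n i)).card = cst n (blk n i))
    ⟨cst n (blk n i) - 1 - (i - st n (blk n i)),
      by have h0 : cst n (blk n i) = (W n (blk n i)).card := rfl
         have := cst_pos n (blk n i); omega⟩ : ℚ)

lemma theta_eq_of_blk {i j : ℕ} (hb : blk n i = j) :
    theta n i = ((W n j).orderIsoOfFin (rfl : (W n j).card = cst n j)
      ⟨cst n j - 1 - (i - st n j),
        by have h0 : cst n j = (W n j).card := rfl
           have := cst_pos n j; omega⟩ : ℚ) := by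
  subst hb; rfl

lemma blk_bounds (i : ℕ) : st n (blk n i) ≤ i ∧ i < st n (blk n i) + cst n (blk n i) := by
  refine ⟨blk_le n i, ?_⟩
  have := blk_lt n i
  rw [st_succ] at this
  exact this

lemma theta_mem (i : ℕ) : theta n i ∈ Vn n (K n i) := by
  rw [← W_K]
  exact ((W n (blk n i)).orderIsoOfFin _ _).2

lemma theta_anti {i i' : ℕ} (h : i < i') (hK : K n i = K n i') : theta n i' < theta n i := by
  have hb : blk n i' = blk n i := by
    have := congrArg PNat.natPred hK
    simpa [K_natPred] using this.symm
  rw [theta_eq_of_blk n hb, theta_eq_of_blk n (rfl : blk n i = blk n i)]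
  obtain ⟨h1, h2⟩ := blk_bounds n i
  obtain ⟨h1', h2'⟩ := blk_bounds n i'
  rw [hb] at h1' h2'
  rw [Subtype.coe_lt_coe]
  apply ((W n (blk n i)).orderIsoOfFin _).lt_iff_lt.2
  rw [Fin.lt_def]
  simp only
  omega

lemma theta_inj : Function.Injective (theta n) := by
  intro i i' h
  by_cases hb : blk n i' = blk n i
  · rw [theta_eq_of_blk n hb, theta_eq_of_blk n (rfl : blk n i = blk n i)] at h
    have h2 := Subtype.coe_injective h
    have hfin := ((W n (blk n i)).orderIsoOfFin _).injective h2
    have hval := congrArg Fin.val hfin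
    simp only at hval
    obtain ⟨h1, h2b⟩ := blk_bounds n i
    obtain ⟨h1', h2b'⟩ := blk_bounds n i'
    rw [hb] at h1' h2b'
    omega
  · exfalso
    have h1 := theta_mem n i
    have h2 := theta_mem n i'
    rw [h] at h1
    have hKK := Vn_disjoint n _ _ _ h1 h2
    have := congrArg PNat.natPred hKK
    simp only [K_natPred] at this
    exact hb this.symm

lemma theta_surj {k : ℕ+} {v : ℚ} (hv : v ∈ Vn n k) : ∃ i ∈ Iv n k, theta n i = v := by
  set j := k.natPred with hj
  have hWk : W n j = Vn n k := by
    unfold W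
    congr 1
    exact natPred_succ k
  have hv' : v ∈ W n j := hWk ▸ hv
  set e := (W n j).orderIsoOfFin (rfl : (W n j).card = cst n j) with he
  set s := e.symm ⟨v, hv'⟩ with hs
  have hslt : (s:ℕ) < cst n j := s.isLt
  set i := st n j + (cst n j - 1 - (s:ℕ)) with hi
  have hcp := cst_pos n j
  have hblk : blk n i = j := blk_eq n (by omega) (by rw [st_succ]; omega)
  refine ⟨i, ?_, ?_⟩
  · have hmem : i ∈ Finset.Ico (st n j) (st n (j+1)) :=
      Finset.mem_Ico.2 ⟨by omega, by rw [st_succ]; omega⟩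
    simpa [Iv, ← hj] using hmem
  · rw [theta_eq_of_blk n hblk]
    have hidx : (⟨cst n j - 1 - (i - st n j),
        by have h0 : cst n j = (W n j).card := rfl
           have := cst_pos n j; omega⟩ : Fin (cst n j)) = s := by
      apply Fin.ext
      simp only
      omega
    have := congrArg (fun t => ((e t : ℚ))) hidx
    rw [hs, OrderIso.apply_symm_apply] at this
    exact this

end Construction

section Norm
variable (n : ℕ)

lemma main_eq (b : ℕ+ → ℝ) :
    combNorm (sierCliquesQ (theta n)) (fun i => b (K n i)) = combNorm (Schreier n) b := by
  classical
  apply le_antisymm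
  · unfold combNorm; refine iSup₂_le fun S hS => ?_
    have hSc : StrictMonoOn (theta n) (S : Set ℕ) := hS
    have hinj : ∀ x ∈ S, ∀ y ∈ S, K n x = K n y → x = y := by
      intro x hx y hy hxy
      by_contra hne
      rcases lt_or_gt_of_ne hne with h' | h'
      · exact absurd (hSc hx hy h') (not_lt.2 (theta_anti n h' hxy).le)
      · exact absurd (hSc hy hx h') (not_lt.2 (theta_anti n h' hxy.symm).le)
    have hsum : ∑ i ∈ S, |b (K n i)| = ∑ k ∈ S.image (K n), |b k| := by
      rw [Finset.sum_image hinj]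
    have hSm : S.image (K n) ∈ Schreier n := by
      apply (schreier_iff_transversal n _).2
      refine ⟨fun k => if h : ∃ i, i ∈ S ∧ K n i = k then theta n h.choose else 0, ?_, ?_⟩
      · intro k hk
        obtain ⟨i, hi, hKi⟩ := Finset.mem_image.1 hk
        have hex : ∃ i, i ∈ S ∧ K n i = k := ⟨i, hi, hKi⟩
        simp only [dif_pos hex]
        have hspec := hex.choose_spec
        have hres := theta_mem n hex.choose
        rwa [hspec.2] at hres
      · intro k hk l hl hkl
        have hk' : k ∈ S.image (K n) := hk
        have hl' : l ∈ S.image (K n) := hl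
        obtain ⟨i, hi, hKi⟩ := Finset.mem_image.1 hk'
        obtain ⟨i', hi', hKi'⟩ := Finset.mem_image.1 hl'
        have hex : ∃ i, i ∈ S ∧ K n i = k := ⟨i, hi, hKi⟩
        have hex' : ∃ i, i ∈ S ∧ K n i = l := ⟨i', hi', hKi'⟩
        simp only [dif_pos hex, dif_pos hex']
        have hs1 := hex.choose_spec
        have hs2 := hex'.choose_spec
        have hlt : hex.choose < hex'.choose := by
          by_contra hc
          push_neg at hc
          have hbm := blk_mono n hc
          have hco : (k:ℕ) < (l:ℕ) := hkl
          rw [← hs1.2, ← hs2.2] at hco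
          have hco' : blk n hex.choose + 1 < blk n hex'.choose + 1 := hco
          omega
        exact hSc hs1.1 hs2.1 hlt
    have key : ENNReal.ofReal (∑ i ∈ S, |b (K n i)|)
        ≤ ENNReal.ofReal (∑ k ∈ S.image (K n), |b k|) := le_of_eq (by rw [hsum])
    exact le_trans key (le_iSup₂_of_le (S.image (K n)) hSm le_rfl)
  · unfold combNorm; refine iSup₂_le fun F hF => ?_
    obtain ⟨f, hf1, hf2⟩ := (schreier_iff_transversal n F).1 hF
    have hsurj : ∀ k ∈ F, ∃ i ∈ Iv n k, theta n i = f k := fun k hk => theta_surj n (hf1 k hk)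
    choose! p hp1 hp2 using hsurj
    have hKp : ∀ k ∈ F, K n (p k) = k := fun k hk => (mem_Iv_iff n).1 (hp1 k hk)
    have hpinj : ∀ x ∈ F, ∀ y ∈ F, p x = p y → x = y := by
      intro x hx y hy h
      rw [← hKp x hx, ← hKp y hy, h]
    have hsum : ∑ k ∈ F, |b k| = ∑ i ∈ F.image p, |b (K n i)| := by
      rw [Finset.sum_image hpinj]
      exact Finset.sum_congr rfl fun k hk => by rw [hKp k hk]
    have hSm : F.image p ∈ sierCliquesQ (theta n) := by
      intro x hx y hy hxy
      have hx' : x ∈ F.image p := hx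
      have hy' : y ∈ F.image p := hy
      obtain ⟨k, hk, hpk⟩ := Finset.mem_image.1 hx'
      obtain ⟨k', hk', hpk'⟩ := Finset.mem_image.1 hy'
      have hkk : k < k' := by
        rcases lt_trichotomy k k' with h' | h' | h'
        · exact h'
        · exfalso; rw [h', hpk'] at hpk; rw [hpk] at hxy; exact lt_irrefl _ hxy
        · exfalso
          have := Iv_ordered n h' (hp1 k' hk') (hp1 k hk)
          rw [hpk, hpk'] at this
          exact absurd hxy (not_lt.2 this.le)
      rw [← hpk, ← hpk', hp2 k hk, hp2 k' hk']
      exact hf2 hk hk' hkk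
    have key : ENNReal.ofReal (∑ k ∈ F, |b k|)
        ≤ ENNReal.ofReal (∑ i ∈ F.image p, |b (K n i)|) := le_of_eq (by rw [hsum])
    exact le_trans key (le_iSup₂_of_le (F.image p) hSm le_rfl)

lemma empty_mem_schreier : (∅ : Finset ℕ+) ∈ Schreier n := by
  cases n with
  | zero => show (∅ : Finset ℕ+).card ≤ 1; simp
  | succ n => exact Or.inl rfl

lemma schreier_hereditary {F G : Finset ℕ+} (hF : F ∈ Schreier n) (hG : G ⊆ F) :
    G ∈ Schreier n := by
  obtain ⟨f, h1, h2⟩ := (schreier_iff_transversal n F).1 hF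
  exact (schreier_iff_transversal n G).2
    ⟨f, fun k hk => h1 k (hG hk), h2.mono (Finset.coe_subset.2 hG)⟩

lemma sum_indicator (F E : Finset ℕ+) :
    ∑ i ∈ F, |if i ∈ E then (1:ℝ) else 0| = ((F ∩ E).card : ℝ) := by
  classical
  have h1 : ∀ i, |if i ∈ E then (1:ℝ) else 0| = if i ∈ E then (1:ℝ) else 0 := by
    intro i; split <;> norm_num
  simp_rw [h1]
  rw [Finset.sum_ite_mem]
  simp

lemma combNorm_indicator (E : Finset ℕ+) :
    combNorm (Schreier n) (fun k => if k ∈ E then (1:ℝ) else 0) = (E.card : ℝ≥0∞) ↔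
      E ∈ Schreier n := by
  constructor
  · intro h
    by_contra hE
    have hne : E ≠ ∅ := fun h0 => hE (h0 ▸ empty_mem_schreier n)
    have hcard : 1 ≤ E.card := Finset.card_pos.2 (Finset.nonempty_iff_ne_empty.2 hne)
    have hub : combNorm (Schreier n) (fun k => if k ∈ E then (1:ℝ) else 0)
        ≤ ((E.card - 1 : ℕ) : ℝ≥0∞) := by
      unfold combNorm; refine iSup₂_le fun F hF => ?_
      rw [sum_indicator]
      have hmem : F ∩ E ∈ Schreier n := schreier_hereditary n hF Finset.inter_subset_left
      have hne2 : F ∩ E ≠ E := fun hc => hE (hc ▸ hmem)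
      have hcard2 : (F ∩ E).card < E.card :=
        Finset.card_lt_card (lt_of_le_of_ne Finset.inter_subset_right hne2)
      rw [ENNReal.ofReal_natCast]
      exact Nat.cast_le.2 (by omega)
    rw [h] at hub
    have hlt : ((E.card - 1 : ℕ) : ℝ≥0∞) < (E.card : ℝ≥0∞) := Nat.cast_lt.2 (by omega)
    exact lt_irrefl _ (lt_of_le_of_lt hub hlt)
  · intro hE
    apply le_antisymm
    · unfold combNorm; refine iSup₂_le fun F hF => ?_
      rw [sum_indicator, ENNReal.ofReal_natCast]
      exact Nat.cast_le.2 (Finset.card_le_card Finset.inter_subset_right)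
    · unfold combNorm; refine le_iSup₂_of_le E hE ?_
      rw [sum_indicator, Finset.inter_self, ENNReal.ofReal_natCast]

end Norm

theorem stmt_16 (n : ℕ) :
    ∃ (θ : ℕ → ℚ) (I : ℕ+ → Finset ℕ), Emulates I θ (Schreier n) ∧
      (∀ k m : ℕ+, k < m → ∀ a ∈ I k, ∀ b ∈ I m, a < b) ∧
      ∀ a : ℕ+ → ℝ, (Function.support a).Finite →
        combNorm (sierCliquesQ θ)
            (fun i => ∑ᶠ k, a k * (if i ∈ I k then (1 : ℝ) else 0)) =
          combNorm (Schreier n) a := by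
  classical
  refine ⟨theta n, Iv n, ⟨?_, ?_, ?_, theta_inj n, ?_⟩, ?_, ?_⟩
  · intro t
    apply Finset.nonempty_Ico.2
    rw [st_succ]
    have := cst_pos n t.natPred
    omega
  · intro t a ha b hb c hac hcb
    rw [Iv, Finset.mem_Ico] at ha hb ⊢
    omega
  · intro s t hst
    rw [Finset.disjoint_left]
    intro x hxs hxt
    exact hst (((mem_Iv_iff n).1 hxs).symm.trans ((mem_Iv_iff n).1 hxt))
  · intro E
    have hfe : (fun i => ∑ t ∈ E, if i ∈ Iv n t then (1:ℝ) else 0)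
        = fun i => (fun k => if k ∈ E then (1:ℝ) else 0) (K n i) := by
      funext i
      simp only
      have step : (∑ t ∈ E, if i ∈ Iv n t then (1:ℝ) else 0)
          = ∑ t ∈ E, if K n i = t then (1:ℝ) else 0 :=
        Finset.sum_congr rfl fun t _ => by
          rcases em (i ∈ Iv n t) with h | h
          · rw [if_pos h, if_pos ((mem_Iv_iff n).1 h)]
          · rw [if_neg h, if_neg (fun hc => h ((mem_Iv_iff n).2 hc))]
      rw [step, Finset.sum_ite_eq]
    rw [hfe, main_eq n (fun k => if k ∈ E then (1:ℝ) else 0)]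
    exact combNorm_indicator n E
  · exact fun k m h a ha b hb => Iv_ordered n h ha hb
  · intro a _
    have hfe : (fun i => ∑ᶠ k, a k * (if i ∈ Iv n k then (1:ℝ) else 0))
        = fun i => a (K n i) := by
      funext i
      rw [finsum_eq_single _ (K n i) ?_]
      · rw [if_pos (mem_Iv_self n i), mul_one]
      · intro k hk
        rw [if_neg, mul_zero]
        intro hmem
        exact hk ((mem_Iv_iff n).1 hmem).symm
    rw [hfe, main_eq]
end
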